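/- For any u ≥ 0, the pure strategy profile (⊥,⊥,⊥) in the game H1(u) is a strong Nash equilibrium: for every mixed strategy profile x' ≠ (⊥,⊥,⊥) there is a player i with x'_i ≠ ⊥ whose payoff under x' is at most their payoff at (⊥,⊥,⊥). -/

import Mathlib

open Set

/-- Expected payoff in a 3-player game where each player has two actions
(`true` = G, `false` = ⊥), given the probabilities `p q r` of playing G. -/
noncomputable def exp3 (f : Bool → Bool → Bool → ℝ) (p q r : ℝ) : ℝ :=
  p*q*r * f true true true + p*q*(1-r) * f true true false +
  p*(1-q)*r * f true false true + p*(1-q)*(1-r) * f true false false +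
  (1-p)*q*r * f false true true + (1-p)*q*(1-r) * f false true false +
  (1-p)*(1-q)*r * f false false true + (1-p)*(1-q)*(1-r) * f false false false

/-- Payoff to player `i` in the game H1(u); `true` = G, `false` = ⊥. -/
noncomputable def H1 (u : ℝ) (i : Fin 3) (a b c : Bool) : ℝ :=
  match a, b, c with
  | true,  true,  true  => ![2*u, -u, -u] i
  | true,  true,  false => ![1, -1, 0] i
  | true,  false, true  => ![1, 0, -1] i
  | true,  false, false => ![-4, 2, 2] i
  | false, true,  true  => ![0, 0, 0] i
  | false, true,  false => ![2, -3, 1] i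
  | false, false, true  => ![2, 1, -3] i
  | false, false, false => ![-2, 1, 1] i

/-- `(p,q,r)` is a (mixed) Nash equilibrium of H1(u). -/
def H1NE (u p q r : ℝ) : Prop :=
  p ∈ Icc (0:ℝ) 1 ∧ q ∈ Icc (0:ℝ) 1 ∧ r ∈ Icc (0:ℝ) 1 ∧
  (∀ p' ∈ Icc (0:ℝ) 1, exp3 (H1 u 0) p' q r ≤ exp3 (H1 u 0) p q r) ∧
  (∀ q' ∈ Icc (0:ℝ) 1, exp3 (H1 u 1) p q' r ≤ exp3 (H1 u 1) p q r) ∧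
  (∀ r' ∈ Icc (0:ℝ) 1, exp3 (H1 u 2) p q r' ≤ exp3 (H1 u 2) p q r)

/-!
H1(u) is zero-sum and (⊥,⊥,⊥) pays (-2, 1, 1), so the three gains from any deviation sum to
zero. If all three players deviate, some gain is therefore nonpositive; this is the only case
in which the term with `u` survives. If player 0 stays at ⊥, neither player 1 nor player 2
can gain. If only player 0 and player 1 deviate, player 2's gain is `p (1 - 2q)`: for `q ≤ 1/2`
the deviators' gains sum to a nonpositive number, and for `q ≥ 1/2` player 1 alone loses.
The coalition of players 0 and 2 is the mirror image.
-/

section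

variable (u p q r : ℝ)

theorem exp3_H1_zero :
    exp3 (H1 u 0) p q r = -2 - 2*p + 4*q + 4*r + p*q + p*r - 6*q*r + 2*u*p*q*r := by
  simp only [exp3, H1]; norm_num [Matrix.cons_val_one, Matrix.cons_val_two]; ring

theorem exp3_H1_one :
    exp3 (H1 u 1) p q r = 1 + p - 4*q + p*q - 2*p*r + 3*q*r - u*p*q*r := by
  simp only [exp3, H1]; norm_num [Matrix.cons_val_one, Matrix.cons_val_two]; ring

theorem exp3_H1_two :
    exp3 (H1 u 2) p q r = 1 + p - 4*r + p*r - 2*p*q + 3*q*r - u*p*q*r := by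
  simp only [exp3, H1]; norm_num [Matrix.cons_val_one, Matrix.cons_val_two]; ring

theorem exp3_H1_sum :
    exp3 (H1 u 0) p q r + exp3 (H1 u 1) p q r + exp3 (H1 u 2) p q r = 0 := by
  rw [exp3_H1_zero, exp3_H1_one, exp3_H1_two]; ring

theorem exp3_H1_zero_swap : exp3 (H1 u 0) p q r = exp3 (H1 u 0) p r q := by
  rw [exp3_H1_zero, exp3_H1_zero]; ring

theorem exp3_H1_two_eq_one_swap : exp3 (H1 u 2) p q r = exp3 (H1 u 1) p r q := by
  rw [exp3_H1_two, exp3_H1_one]; ring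

variable {u p q r}

theorem exp3_H1_one_le_at_left_zero (hq : 0 ≤ q) (hr : r ≤ 1) :
    exp3 (H1 u 1) 0 q r ≤ 1 := by
  rw [exp3_H1_one]; nlinarith

theorem exp3_H1_zero_le_or_one_le_at_right_zero (hp : p ∈ Icc (0:ℝ) 1) :
    exp3 (H1 u 0) p q 0 ≤ -2 ∨ exp3 (H1 u 1) p q 0 ≤ 1 := by
  rw [exp3_H1_zero, exp3_H1_one]
  obtain ⟨hp0, hp1⟩ := hp
  rcases le_total q (1/2) with hq2 | hq2
  · by_contra! h
    nlinarith
  · right; nlinarith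

end

theorem stmt2 (u : ℝ) (p q r : ℝ)
    (hp : p ∈ Icc (0:ℝ) 1) (hq : q ∈ Icc (0:ℝ) 1) (hr : r ∈ Icc (0:ℝ) 1)
    (hne : ¬ (p = 0 ∧ q = 0 ∧ r = 0)) :
    (p ≠ 0 ∧ exp3 (H1 u 0) p q r ≤ exp3 (H1 u 0) 0 0 0) ∨
    (q ≠ 0 ∧ exp3 (H1 u 1) p q r ≤ exp3 (H1 u 1) 0 0 0) ∨
    (r ≠ 0 ∧ exp3 (H1 u 2) p q r ≤ exp3 (H1 u 2) 0 0 0) := by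
  have b0 : exp3 (H1 u 0) 0 0 0 = -2 := by rw [exp3_H1_zero]; ring
  have b1 : exp3 (H1 u 1) 0 0 0 = 1 := by rw [exp3_H1_one]; ring
  have b2 : exp3 (H1 u 2) 0 0 0 = 1 := by rw [exp3_H1_two]; ring
  rw [b0, b1, b2]
  rcases eq_or_ne p 0 with rfl | hp0
  · rcases eq_or_ne q 0 with rfl | hq0
    · have hr0 : r ≠ 0 := fun h => hne ⟨rfl, rfl, h⟩
      rw [exp3_H1_two_eq_one_swap]
      exact Or.inr (Or.inr ⟨hr0, exp3_H1_one_le_at_left_zero hr.1 zero_le_one⟩)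
    · exact Or.inr (Or.inl ⟨hq0, exp3_H1_one_le_at_left_zero hq.1 hr.2⟩)
  rcases eq_or_ne q 0 with rfl | hq0 <;> rcases eq_or_ne r 0 with rfl | hr0
  · exact Or.inl ⟨hp0, by rw [exp3_H1_zero]; linarith [hp.1]⟩
  · rw [exp3_H1_zero_swap, exp3_H1_two_eq_one_swap]
    rcases exp3_H1_zero_le_or_one_le_at_right_zero (q := r) hp with h | h
    · exact Or.inl ⟨hp0, h⟩
    · exact Or.inr (Or.inr ⟨hr0, h⟩)
  · rcases exp3_H1_zero_le_or_one_le_at_right_zero (q := q) hp with h | h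
    · exact Or.inl ⟨hp0, h⟩
    · exact Or.inr (Or.inl ⟨hq0, h⟩)
  · by_contra! h
    linarith [exp3_H1_sum u p q r, h.1 hp0, h.2.1 hq0, h.2.2 hr0]
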